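/- arXiv:2406.16747 — 5 statements merged into one kernel-verified Lean document; each statement's English description precedes it below -/
import Mathlib

section
/- If p* minimizes ‖p − z‖² over C = {p : 0 ≤ p ≤ 1, ∑ p_i = k}, then there exists τ ∈ ℝ such that p*_i = max(min(z_i − τ, 1), 0) for every coordinate i. -/
/-!
Moving mass `ε` from a coordinate `j` with `p j > 0` to a coordinate `i` with `p i < 1` stays in
`C`, so the first-order optimality condition of the projection onto the convex set `C`,
`⟪z - p, q - p⟫ ≤ 0`, gives `z i - p i ≤ z j - p j`. Hence every value of `z - p` on `{p < 1}`
is at most every value on `{p > 0}`, and any `τ` separating these two finite sets is a threshold: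
`p i = 0` forces `z i ≤ τ`, `p i = 1` forces `z i - 1 ≥ τ`, and `0 < p i < 1` forces
`p i = z i - τ`.
-/

open Finset

def cappedSimplex (ι : Type*) [Fintype ι] (k : ℝ) : Set (EuclideanSpace ℝ ι) :=
  {p | (∀ i, 0 ≤ p i ∧ p i ≤ 1) ∧ ∑ i, p i = k}

theorem real_inner_sub_nonpos_of_isMinOn_norm_sq {F : Type*} [NormedAddCommGroup F]
    [InnerProductSpace ℝ F] {K : Set F} (hK : Convex ℝ K) {z p : F} (hp : p ∈ K)
    (hmin : IsMinOn (fun q => ‖q - z‖ ^ 2) K p) : ∀ q ∈ K, inner ℝ (z - p) (q - p) ≤ 0 := by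
  have : Nonempty K := ⟨⟨p, hp⟩⟩
  refine (norm_eq_iInf_iff_real_inner_le_zero hK hp).1 (le_antisymm (le_ciInf fun q => ?_) ?_)
  · simpa only [norm_sub_rev z] using
      (pow_le_pow_iff_left₀ (norm_nonneg _) (norm_nonneg _) two_ne_zero).1 (hmin q.2)
  · exact ciInf_le (f := fun q : K => ‖z - q‖) ⟨0, Set.forall_mem_range.2 fun _ => norm_nonneg _⟩
      ⟨p, hp⟩

theorem Finite.exists_separating_of_forall_le {ι : Type*} [Finite ι] {P Q : ι → Prop}
    (f : ι → ℝ) (h : ∀ i j, P i → Q j → f i ≤ f j) :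
    ∃ τ, (∀ i, P i → f i ≤ τ) ∧ ∀ j, Q j → τ ≤ f j := by
  rcases Set.eq_empty_or_nonempty {i | P i} with hP | hP
  · obtain ⟨c, hc⟩ := Finite.bddBelow_range f
    exact ⟨c, fun i hi => (hP.subset hi).elim, fun j _ => hc ⟨j, rfl⟩⟩
  · obtain ⟨a, ha, hmax⟩ := Set.exists_max_image _ f (Set.toFinite _) hP
    exact ⟨f a, hmax, fun j hj => h a j ha hj⟩

theorem eq_max_min_of_le_of_ge {x y : ℝ} (h0 : 0 ≤ x) (h1 : x ≤ 1)
    (hlt : x < 1 → y ≤ x) (hpos : 0 < x → x ≤ y) : x = max (min y 1) 0 := by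
  rcases h0.eq_or_lt with rfl | h0
  · simp [hlt one_pos]
  rcases h1.eq_or_lt with rfl | h1
  · simp [hpos one_pos]
  rw [le_antisymm (hlt h1) (hpos h0), min_eq_left h1.le, max_eq_left h0.le]

namespace cappedSimplex

variable {ι : Type*} [Fintype ι] {k : ℝ}

theorem convex : Convex ℝ (cappedSimplex ι k) := by
  rintro x ⟨hx, hxk⟩ y ⟨hy, hyk⟩ a b ha hb hab
  refine ⟨fun i => ?_, ?_⟩
  · simp only [PiLp.add_apply, PiLp.smul_apply, smul_eq_mul]
    constructor <;> nlinarith [hx i, hy i]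
  · simp only [PiLp.add_apply, PiLp.smul_apply, smul_eq_mul, sum_add_distrib, ← mul_sum, hxk, hyk,
      ← add_mul, hab, one_mul]

theorem add_smul_single_sub_single_mem [DecidableEq ι] {p : EuclideanSpace ℝ ι}
    (hp : p ∈ cappedSimplex ι k) {i j : ι} (hij : i ≠ j) {ε : ℝ} (hε : 0 ≤ ε)
    (hεi : ε ≤ 1 - p i) (hεj : ε ≤ p j) :
    p + ε • (EuclideanSpace.single i 1 - EuclideanSpace.single j 1) ∈ cappedSimplex ι k := by
  obtain ⟨hp01, hpk⟩ := hp
  refine ⟨fun l => ?_, ?_⟩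
  · simp only [PiLp.add_apply, PiLp.smul_apply, PiLp.sub_apply, PiLp.single_apply, smul_eq_mul]
    rcases eq_or_ne l i with rfl | hli
    · simp only [if_true, if_neg hij]
      constructor <;> linarith [hp01 l]
    rcases eq_or_ne l j with rfl | hlj
    · simp only [if_true, if_neg hli]
      constructor <;> linarith [hp01 l]
    simpa [hli, hlj] using hp01 l
  · simp [sum_add_distrib, ← mul_sum, hpk]

variable {z p : EuclideanSpace ℝ ι}

theorem sub_le_sub_of_isMinOn (hp : p ∈ cappedSimplex ι k)
    (hmin : IsMinOn (fun q => ‖q - z‖ ^ 2) (cappedSimplex ι k) p) {i j : ι} (hi : p i < 1)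
    (hj : 0 < p j) : z i - p i ≤ z j - p j := by
  classical
  rcases eq_or_ne i j with rfl | hij
  · rfl
  set ε := min (1 - p i) (p j)
  have hε : 0 < ε := lt_min (sub_pos.2 hi) hj
  have hq := add_smul_single_sub_single_mem hp hij hε.le (min_le_left _ _) (min_le_right _ _)
  have hinner := real_inner_sub_nonpos_of_isMinOn_norm_sq convex hp hmin _ hq
  rw [add_sub_cancel_left, inner_smul_right, inner_sub_right, EuclideanSpace.inner_single_right,
    EuclideanSpace.inner_single_right] at hinner
  simp only [PiLp.sub_apply, one_mul, conj_trivial] at hinner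
  nlinarith

theorem exists_soft_threshold_of_isMinOn (hp : p ∈ cappedSimplex ι k)
    (hmin : IsMinOn (fun q => ‖q - z‖ ^ 2) (cappedSimplex ι k) p) :
    ∃ τ : ℝ, ∀ i, p i = max (min (z i - τ) 1) 0 := by
  obtain ⟨τ, hlt, hpos⟩ := Finite.exists_separating_of_forall_le (fun i => z i - p i)
    (P := fun i => p i < 1) (Q := fun j => 0 < p j) fun i j hi hj =>
      sub_le_sub_of_isMinOn hp hmin hi hj
  exact ⟨τ, fun i => eq_max_min_of_le_of_ge (hp.1 i).1 (hp.1 i).2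
    (fun h => by linarith [hlt i h]) (fun h => by linarith [hpos i h])⟩

end cappedSimplex

theorem sparsek_minimizer_is_soft_threshold_general
    (m : ℕ) (k : ℝ)
    (z : EuclideanSpace ℝ (Fin m))
    (C : Set (EuclideanSpace ℝ (Fin m)))
    (hC : C = {p | (∀ i, 0 ≤ p i ∧ p i ≤ 1) ∧ ∑ i, p i = k})
    (p : EuclideanSpace ℝ (Fin m))
    (hp : p ∈ C ∧ ∀ q ∈ C, ‖p - z‖ ^ 2 ≤ ‖q - z‖ ^ 2) :
    ∃ τ : ℝ, ∀ i, p i = max (min (z i - τ) 1) 0 := by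
  subst hC
  exact cappedSimplex.exists_soft_threshold_of_isMinOn hp.1 (isMinOn_iff.2 hp.2)

/-- Soft-thresholding form of the SparseK projection: a minimizer of `‖p - z‖²`
over `C = {p : 0 ≤ p ≤ 1, ∑ pᵢ = k}` has the form `pᵢ = max(min(zᵢ - τ, 1), 0)`. -/
theorem sparsek_minimizer_is_soft_threshold
    (m : ℕ) (hm : 0 < m) (k : ℝ) (hk0 : 0 < k) (hkm : k < (m : ℝ))
    (z : EuclideanSpace ℝ (Fin m))
    (C : Set (EuclideanSpace ℝ (Fin m)))
    (hC : C = {p | (∀ i, 0 ≤ p i ∧ p i ≤ 1) ∧ ∑ i, p i = k})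
    (p : EuclideanSpace ℝ (Fin m))
    (hp : p ∈ C ∧ ∀ q ∈ C, ‖p - z‖ ^ 2 ≤ ‖q - z‖ ^ 2) :
    ∃ τ : ℝ, ∀ i, p i = max (min (z i - τ) 1) 0 :=
  sparsek_minimizer_is_soft_threshold_general m k z C hC p hp
end

section
/- Let p(τ) = clip(z − τ·1) with clip(x) = max(min(x,1),0) applied coordinatewise. If τ satisfies ∑_i p(τ)_i = k, then p(τ) is the unique minimizer of ‖p − z‖² over C = {p : 0 ≤ p ≤ 1, ∑ p_i = k}. -/
/-! Clipping to `[0, 1]` is the projection onto `[0, 1]`, so each coordinate satisfies the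
variational inequality `(pᵢ - (zᵢ - τ)) (qᵢ - pᵢ) ≥ 0` for `qᵢ ∈ [0, 1]`. Summing, the shift `τ`
drops out because `q` and `p` have the same coordinate sum, leaving `⟪p - z, q - p⟫ ≥ 0`.
Pythagoras then gives `‖q - z‖² ≥ ‖p - z‖² + ‖q - p‖²`, which is both optimality and uniqueness. -/

open Finset

lemma clip_sub_mul_sub_nonneg (a b : ℝ) (hb0 : 0 ≤ b) (hb1 : b ≤ 1) :
    0 ≤ (max (min a 1) 0 - a) * (b - max (min a 1) 0) := by
  rcases le_total a 0 with ha0 | ha0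
  · rw [min_eq_left (ha0.trans zero_le_one), max_eq_right ha0]
    nlinarith
  rcases le_total 1 a with ha1 | ha1
  · rw [min_eq_right ha1, max_eq_left zero_le_one]
    nlinarith
  · rw [min_eq_left ha1, max_eq_left ha0]
    simp

lemma inner_clip_sub_nonneg {ι : Type*} [Fintype ι] (z p q : EuclideanSpace ℝ ι) (τ : ℝ)
    (hp : ∀ i, p i = max (min (z i - τ) 1) 0) (hq : ∀ i, 0 ≤ q i ∧ q i ≤ 1)
    (hsum : ∑ i, q i = ∑ i, p i) :
    0 ≤ inner ℝ (p - z) (q - p) := by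
  have hshift : ∑ i, (p i - (z i - τ)) * (q i - p i)
      = ∑ i, (p i - z i) * (q i - p i) + τ * (∑ i, q i - ∑ i, p i) := by
    rw [← sum_sub_distrib, mul_sum, ← sum_add_distrib]
    exact sum_congr rfl fun i _ => by ring
  have hcoord : 0 ≤ ∑ i, (p i - (z i - τ)) * (q i - p i) :=
    sum_nonneg fun i _ => hp i ▸ clip_sub_mul_sub_nonneg _ _ (hq i).1 (hq i).2
  rw [hshift, hsum, sub_self, mul_zero, add_zero] at hcoord
  simpa [PiLp.inner_apply, mul_comm] using hcoord

lemma norm_sub_sq_add_norm_sub_sq_le {F : Type*} [NormedAddCommGroup F] [InnerProductSpace ℝ F]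
    {z p q : F} (h : 0 ≤ inner ℝ (p - z) (q - p)) :
    ‖p - z‖ ^ 2 + ‖q - p‖ ^ 2 ≤ ‖q - z‖ ^ 2 := by
  rw [← sub_add_sub_cancel q p z, add_comm (q - p), norm_add_sq_real]
  linarith

lemma unique_minimizer_of_pythagorean_le {E : Type*} [NormedAddCommGroup E]
    {C : Set E} {z p : E} (hpC : p ∈ C)
    (hpyth : ∀ q ∈ C, ‖p - z‖ ^ 2 + ‖q - p‖ ^ 2 ≤ ‖q - z‖ ^ 2) :
    (p ∈ C ∧ ∀ q ∈ C, ‖p - z‖ ^ 2 ≤ ‖q - z‖ ^ 2) ∧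
      ∀ q ∈ C, (∀ r ∈ C, ‖q - z‖ ^ 2 ≤ ‖r - z‖ ^ 2) → q = p := by
  refine ⟨⟨hpC, fun q hq => ?_⟩, fun q hq hmin => ?_⟩
  · nlinarith [hpyth q hq, sq_nonneg ‖q - p‖]
  · have hsq : ‖q - p‖ ^ 2 ≤ 0 := by linarith [hpyth q hq, hmin p hpC]
    have hnorm : ‖q - p‖ = 0 := by nlinarith [norm_nonneg (q - p)]
    exact sub_eq_zero.mp (norm_eq_zero.mp hnorm)

theorem sparsek_clip_with_correct_sum_is_unique_minimizer_general
    (m : ℕ) (k : ℝ)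
    (z : EuclideanSpace ℝ (Fin m))
    (C : Set (EuclideanSpace ℝ (Fin m)))
    (hC : C = {p | (∀ i, 0 ≤ p i ∧ p i ≤ 1) ∧ ∑ i, p i = k})
    (τ : ℝ) (p : EuclideanSpace ℝ (Fin m))
    (hp : ∀ i, p i = max (min (z i - τ) 1) 0)
    (hsum : ∑ i, p i = k) :
    (p ∈ C ∧ ∀ q ∈ C, ‖p - z‖ ^ 2 ≤ ‖q - z‖ ^ 2) ∧
      ∀ q ∈ C, (∀ r ∈ C, ‖q - z‖ ^ 2 ≤ ‖r - z‖ ^ 2) → q = p := by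
  subst hC
  have hpC : (∀ i, 0 ≤ p i ∧ p i ≤ 1) ∧ ∑ i, p i = k :=
    ⟨fun i => hp i ▸ ⟨le_max_right _ _, max_le (min_le_right _ _) zero_le_one⟩, hsum⟩
  refine unique_minimizer_of_pythagorean_le hpC fun q ⟨hq, hqsum⟩ => ?_
  exact norm_sub_sq_add_norm_sub_sq_le
    (inner_clip_sub_nonneg z p q τ hp hq (hqsum.trans hsum.symm))

/-- Sufficiency of the KKT characterization: if the clipped vector
`p(τ)ᵢ = max(min(zᵢ - τ, 1), 0)` has coordinate sum `k`, then it is the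
unique minimizer of `‖p - z‖²` over `C = {p : 0 ≤ p ≤ 1, ∑ pᵢ = k}`. -/
theorem sparsek_clip_with_correct_sum_is_unique_minimizer
    (m : ℕ) (hm : 0 < m) (k : ℝ) (hk0 : 0 < k) (hkm : k < (m : ℝ))
    (z : EuclideanSpace ℝ (Fin m))
    (C : Set (EuclideanSpace ℝ (Fin m)))
    (hC : C = {p | (∀ i, 0 ≤ p i ∧ p i ≤ 1) ∧ ∑ i, p i = k})
    (τ : ℝ) (p : EuclideanSpace ℝ (Fin m))
    (hp : ∀ i, p i = max (min (z i - τ) 1) 0)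
    (hsum : ∑ i, p i = k) :
    (p ∈ C ∧ ∀ q ∈ C, ‖p - z‖ ^ 2 ≤ ‖q - z‖ ^ 2) ∧
      ∀ q ∈ C, (∀ r ∈ C, ‖q - z‖ ^ 2 ≤ ‖r - z‖ ^ 2) → q = p :=
  sparsek_clip_with_correct_sum_is_unique_minimizer_general m k z C hC τ p hp hsum
end

section
/- Exactness on integer k with well-separated scores: if z has at least k coordinates with z_i ≥ τ + 1 where τ is the SparseK threshold, and the rest satisfy z_i ≤ τ, then SparseK(z,k) is exactly the 0/1 indicator of the top-k coordinates of z. -/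
theorem max_min_sub_one_zero_eq_ite_of_separated {x τ : ℝ} (h : τ + 1 ≤ x ∨ x ≤ τ) :
    max (min (x - τ) 1) 0 = if τ + 1 ≤ x then 1 else 0 := by
  rcases h with hx | hx
  · rw [if_pos hx, min_eq_right (by linarith), max_eq_left zero_le_one]
  · rw [if_neg (by linarith), max_eq_right (min_le_of_left_le (by linarith))]

theorem sparsek_exact_topk_when_separated_general
    (m k : ℕ)
    (z : Fin m → ℝ) (τ : ℝ) (p : Fin m → ℝ)
    (hp : ∀ i, p i = max (min (z i - τ) 1) 0)
    (hsum : ∑ i, p i = (k : ℝ))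
    (T : Finset (Fin m)) (hT : ∀ i, i ∈ T ↔ τ + 1 ≤ z i)
    (hgap : ∀ i, τ + 1 ≤ z i ∨ z i ≤ τ) :
    T.card = k ∧ ∀ i, p i = if i ∈ T then 1 else 0 := by
  have hind : ∀ i, p i = if i ∈ T then 1 else 0 := fun i => by
    simp only [hp, max_min_sub_one_zero_eq_ite_of_separated (hgap i), hT]
  refine ⟨?_, hind⟩
  have hcard : (T.card : ℝ) = k := by
    rw [← hsum, Finset.sum_congr rfl fun i _ => hind i, Finset.sum_boole]
    simp
  exact_mod_cast hcard

/-- Exactness on integer `k` with well-separated scores: if no score lies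
strictly between `τ` and `τ + 1`, and at least `k` coordinates satisfy
`zᵢ ≥ τ + 1`, then `SparseK(z, k)` is exactly the 0/1 indicator of the
top-`k` coordinates of `z`. -/
theorem sparsek_exact_topk_when_separated
    (m k : ℕ) (hk : 0 < k) (hkm : k ≤ m)
    (z : Fin m → ℝ) (τ : ℝ) (p : Fin m → ℝ)
    (hp : ∀ i, p i = max (min (z i - τ) 1) 0)
    (hsum : ∑ i, p i = (k : ℝ))
    (T : Finset (Fin m)) (hT : ∀ i, i ∈ T ↔ τ + 1 ≤ z i)
    (hcard : k ≤ T.card)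
    (hgap : ∀ i, τ + 1 ≤ z i ∨ z i ≤ τ) :
    T.card = k ∧ ∀ i, p i = if i ∈ T then 1 else 0 :=
  sparsek_exact_topk_when_separated_general m k z τ p hp hsum T hT hgap
end

section
/- On a region where the fractional set S = {i : τ < z_i < τ+1} is fixed and nonempty, the Jacobian of SparseK at z is J = Diag(s) − s sᵀ/|S|, where s is the 0/1 indicator vector of S. -/
/-!
Near `z` every coordinate `zᵢ - τ(z)` stays in the same one of the three regions `(-∞, 0)`,
`(0, 1)`, `(1, ∞)`, so the clipping acts locally as `0`, the identity or `1`. With `F` and `S`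
fixed, `τ` is affine with gradient `s / |S|`, and the chain rule gives `sᵢ (eᵢ - s / |S|)`
as the `i`-th row of the Jacobian.
-/

open Filter Set

noncomputable def unitClip (t : ℝ) : ℝ := max (min t 1) 0

theorem hasDerivAt_unitClip_of_mem_Ioo {t : ℝ} (ht : t ∈ Ioo 0 1) : HasDerivAt unitClip 1 t :=
  (hasDerivAt_id t).congr_of_eventuallyEq <| by
    filter_upwards [Ioo_mem_nhds ht.1 ht.2] with s hs
    simp [unitClip, min_eq_left hs.2.le, max_eq_left hs.1.le]

theorem hasDerivAt_unitClip_of_one_lt {t : ℝ} (ht : 1 < t) : HasDerivAt unitClip 0 t :=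
  (hasDerivAt_const t 1).congr_of_eventuallyEq <|
    (eventually_gt_nhds ht).mono fun s hs => by simp [unitClip, min_eq_right hs.le]

theorem hasDerivAt_unitClip_of_neg {t : ℝ} (ht : t < 0) : HasDerivAt unitClip 0 t :=
  (hasDerivAt_const t 0).congr_of_eventuallyEq <|
    (eventually_lt_nhds ht).mono fun s hs => by
      simp [unitClip, min_eq_left (hs.trans zero_lt_one).le, max_eq_right hs.le]

theorem hasFDerivAt_sum_add_div {ι : Type*} [Fintype ι] (S : Finset ι) (a c : ℝ) (z : ι → ℝ) :
    HasFDerivAt (fun y : ι → ℝ => (∑ j ∈ S, y j + a) / c)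
      (c⁻¹ • ∑ j ∈ S, ContinuousLinearMap.proj (R := ℝ) (φ := fun _ : ι => ℝ) j) z := by
  simp_rw [div_eq_mul_inv]
  exact ((HasFDerivAt.fun_sum fun j _ => hasFDerivAt_apply j z).add_const a).mul_const c⁻¹

theorem sparsek_jacobian_on_fixed_region_general
    (m : ℕ) (k : ℝ) (F S : Finset (Fin m))
    (τ : (Fin m → ℝ) → ℝ)
    (hτ : ∀ y, τ y = (∑ j ∈ S, y j + (F.card : ℝ) - k) / (S.card : ℝ))
    (g : (Fin m → ℝ) → (Fin m → ℝ))
    (hg : ∀ y i, g y i = max (min (y i - τ y) 1) 0)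
    (z : Fin m → ℝ)
    (hF : ∀ i ∈ F, 1 < z i - τ z)
    (hS : ∀ i ∈ S, 0 < z i - τ z ∧ z i - τ z < 1)
    (hout : ∀ i, i ∉ F → i ∉ S → z i - τ z < 0) :
    ∃ L : (Fin m → ℝ) →L[ℝ] (Fin m → ℝ), HasFDerivAt g L z ∧
      ∀ v i, L v i = (if i ∈ S then (1 : ℝ) else 0) *
        (v i - (∑ j ∈ S, v j) / (S.card : ℝ)) := by
  set τ' : (Fin m → ℝ) →L[ℝ] ℝ := (S.card : ℝ)⁻¹ • ∑ j ∈ S, ContinuousLinearMap.proj j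
  have hτ_deriv : HasFDerivAt τ τ' z := by
    simp_rw [funext hτ, add_sub_assoc]
    exact hasFDerivAt_sum_add_div S _ _ z
  have hclip : ∀ i, HasDerivAt unitClip (if i ∈ S then 1 else 0) (z i - τ z) := by
    intro i
    split_ifs with hiS
    · exact hasDerivAt_unitClip_of_mem_Ioo (hS i hiS)
    · by_cases hiF : i ∈ F
      · exact hasDerivAt_unitClip_of_one_lt (hF i hiF)
      · exact hasDerivAt_unitClip_of_neg (hout i hiF hiS)
  refine ⟨ContinuousLinearMap.pi fun i =>
    (if i ∈ S then (1 : ℝ) else 0) • (ContinuousLinearMap.proj i - τ'), ?_, fun v i => ?_⟩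
  · have hg' : g = fun y i => unitClip (y i - τ y) := funext fun y => funext (hg y)
    rw [hg', hasFDerivAt_pi]
    exact fun i =>
      (hclip i).comp_hasFDerivAt (f := fun y => y i - τ y) z ((hasFDerivAt_apply i z).sub hτ_deriv)
  · by_cases hi : i ∈ S <;> simp [τ', hi, div_eq_inv_mul]

/-- On a region where the saturated set `F` and the (nonempty) fractional set
`S` of SparseK are fixed, SparseK is differentiable at `z` with Jacobian
`J = Diag(s) - s sᵀ / |S|`, i.e. `(Jv)ᵢ = sᵢ (vᵢ - (∑_{j∈S} vⱼ)/|S|)`,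
where `s` is the 0/1 indicator of `S`. -/
theorem sparsek_jacobian_on_fixed_region
    (m : ℕ) (k : ℝ) (F S : Finset (Fin m)) (hSne : S.Nonempty)
    (hFS : Disjoint F S)
    (τ : (Fin m → ℝ) → ℝ)
    (hτ : ∀ y, τ y = (∑ j ∈ S, y j + (F.card : ℝ) - k) / (S.card : ℝ))
    (g : (Fin m → ℝ) → (Fin m → ℝ))
    (hg : ∀ y i, g y i = max (min (y i - τ y) 1) 0)
    (z : Fin m → ℝ)
    (hF : ∀ i ∈ F, 1 < z i - τ z)
    (hS : ∀ i ∈ S, 0 < z i - τ z ∧ z i - τ z < 1)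
    (hout : ∀ i, i ∉ F → i ∉ S → z i - τ z < 0) :
    ∃ L : (Fin m → ℝ) →L[ℝ] (Fin m → ℝ), HasFDerivAt g L z ∧
      ∀ v i, L v i = (if i ∈ S then (1 : ℝ) else 0) *
        (v i - (∑ j ∈ S, v j) / (S.card : ℝ)) :=
  sparsek_jacobian_on_fixed_region_general m k F S τ hτ g hg z hF hS hout
end

section
/- At the optimal pair (u*, w*) in the SparseK threshold search, with τ = (∑_{u* < j ≤ w*} z_{(j)} + u* − k)/(w* − u*) and sorted coordinates z_{(1)} > … > z_{(m)}, the conditions z_{(u*)} ≥ τ + 1 > z_{(u*+1)} and z_{(w*)} > τ ≥ z_{(w*+1)} hold, and conversely any pair (u,w) satisfying these conditions yields the correct threshold τ(z). -/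
/-! Write `clip a = max (min a 1) 0`. With `z` decreasing, the coordinates where `clip (z j - t)`
is saturated, fractional or zero form three consecutive blocks `[1, u]`, `(u, w]`, `(w, m]`; the
counts `u*`, `w*` of the true threshold produce exactly this block structure, and for a fixed block
structure the clipped sum is the affine function `u + ∑_{u<j≤w} z j - (w - u) t` of `t`, so it
equals `k` precisely at the closed-form `τ`. The four boundary conditions say the same as the block
structure. Finally, the clipped sum is strictly decreasing in `t` as long as some coordinate is
fractional, so two thresholds with a fractional coordinate and the same clipped sum coincide. -/

open Finset

lemma clip_eq_one_iff {a : ℝ} : max (min a 1) 0 = 1 ↔ 1 ≤ a := by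
  constructor
  · intro h
    by_contra! ha
    rw [min_eq_left ha.le] at h
    rcases max_choice a 0 with hc | hc <;> rw [hc] at h <;> linarith
  · intro ha
    rw [min_eq_right ha, max_eq_left zero_le_one]

lemma clip_pos_iff {a : ℝ} : 0 < max (min a 1) 0 ↔ 0 < a := by
  rw [lt_max_iff, lt_min_iff]
  constructor
  · rintro (⟨ha, -⟩ | h)
    exacts [ha, absurd h (lt_irrefl 0)]
  · exact fun ha => Or.inl ⟨ha, one_pos⟩

lemma sum_clip_lt_sum_clip_of_lt {ι : Type*} {s : Finset ι} {f : ι → ℝ} {t t' : ℝ}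
    (htt' : t' < t) {j : ι} (hj : j ∈ s) (hpos : 0 < f j - t) (hlt : f j - t < 1) :
    ∑ i ∈ s, max (min (f i - t) 1) 0 < ∑ i ∈ s, max (min (f i - t') 1) 0 := by
  refine sum_lt_sum (fun i _ => by gcongr) ⟨j, hj, ?_⟩
  rw [min_eq_left hlt.le, max_eq_left hpos.le]
  exact (lt_min (by linarith) hlt).trans_le (le_max_left _ _)

lemma eq_of_sum_clip_eq {ι : Type*} {s : Finset ι} {f : ι → ℝ} {t t' : ℝ}
    (hfrac : ∃ j ∈ s, 0 < f j - t ∧ f j - t < 1)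
    (hfrac' : ∃ j ∈ s, 0 < f j - t' ∧ f j - t' < 1)
    (h : ∑ i ∈ s, max (min (f i - t) 1) 0 = ∑ i ∈ s, max (min (f i - t') 1) 0) :
    t = t' := by
  obtain ⟨j, hj, hpos, hlt⟩ := hfrac
  obtain ⟨j', hj', hpos', hlt'⟩ := hfrac'
  rcases lt_trichotomy t t' with htt' | rfl | htt'
  · exact absurd h (sum_clip_lt_sum_clip_of_lt htt' hj' hpos' hlt').ne'
  · rfl
  · exact absurd h (sum_clip_lt_sum_clip_of_lt htt' hj hpos hlt).ne

lemma le_card_filter_Icc_iff {p : ℕ → Prop} [DecidablePred p] {m : ℕ}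
    (hp : ∀ i j, 1 ≤ i → i ≤ j → j ≤ m → p j → p i) {j : ℕ} (hj1 : 1 ≤ j) (hjm : j ≤ m) :
    j ≤ #{i ∈ Icc 1 m | p i} ↔ p j := by
  constructor
  · intro hle
    by_contra hpj
    have hsub : {i ∈ Icc 1 m | p i} ⊆ Icc 1 (j - 1) := by
      intro i hi
      simp only [mem_filter, mem_Icc] at hi ⊢
      refine ⟨hi.1.1, ?_⟩
      by_contra! hji
      exact hpj (hp j i hj1 (by omega) hi.1.2 hi.2)
    have := card_le_card hsub
    simp only [Nat.card_Icc] at this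
    omega
  · intro hpj
    have hsub : Icc 1 j ⊆ {i ∈ Icc 1 m | p i} := by
      intro i hi
      simp only [mem_filter, mem_Icc] at hi ⊢
      exact ⟨⟨hi.1, hi.2.trans hjm⟩, hp i j hi.1 hi.2 hjm hpj⟩
    simpa using card_le_card hsub

def IsClipSplit (z : ℕ → ℝ) (m u w : ℕ) (t : ℝ) : Prop :=
  (∀ j ∈ Ioc 0 u, 1 ≤ z j - t) ∧ (∀ j ∈ Ioc u w, 0 < z j - t ∧ z j - t < 1) ∧
    (∀ j ∈ Ioc w m, z j - t ≤ 0)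

section IsClipSplit

variable {z : ℕ → ℝ} {m u w : ℕ} {t : ℝ}

lemma IsClipSplit.sum_clip (h : IsClipSplit z m u w t) (huw : u ≤ w) (hwm : w ≤ m) :
    ∑ j ∈ Icc 1 m, max (min (z j - t) 1) 0 = u + ∑ j ∈ Icc (u + 1) w, z j - (w - u) * t := by
  obtain ⟨hsat, hfrac, hzero⟩ := h
  have hsat_sum : ∑ j ∈ Ioc 0 u, max (min (z j - t) 1) 0 = u := by
    rw [sum_congr rfl fun j hj => clip_eq_one_iff.2 (hsat j hj)]
    simp
  have hfrac_sum : ∑ j ∈ Ioc u w, max (min (z j - t) 1) 0 = ∑ j ∈ Ioc u w, (z j - t) :=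
    sum_congr rfl fun j hj => by
      rw [min_eq_left (hfrac j hj).2.le, max_eq_left (hfrac j hj).1.le]
  have hzero_sum : ∑ j ∈ Ioc w m, max (min (z j - t) 1) 0 = 0 :=
    sum_eq_zero fun j hj => max_eq_right ((min_le_left _ _).trans (hzero j hj))
  rw [Icc_add_one_left_eq_Ioc, show Icc 1 m = Ioc 0 m from Icc_add_one_left_eq_Ioc 0 m,
    ← sum_Ioc_consecutive _ (Nat.zero_le u) (huw.trans hwm), ← sum_Ioc_consecutive _ huw hwm,
    hsat_sum, hfrac_sum, hzero_sum, sum_sub_distrib, sum_const, Nat.card_Ioc, nsmul_eq_mul,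
    Nat.cast_sub huw]
  ring

lemma IsClipSplit.sum_clip_eq_iff (h : IsClipSplit z m u w t) (huw : u < w) (hwm : w ≤ m)
    {k : ℝ} :
    ∑ j ∈ Icc 1 m, max (min (z j - t) 1) 0 = k ↔
      t = (∑ j ∈ Icc (u + 1) w, z j + (u : ℝ) - k) / ((w : ℝ) - (u : ℝ)) := by
  have hwu : (0 : ℝ) < w - u := sub_pos.2 (Nat.cast_lt.2 huw)
  rw [h.sum_clip huw.le hwm, eq_div_iff hwu.ne']
  constructor <;> intro <;> linarith

lemma IsClipSplit.exists_frac (h : IsClipSplit z m u w t) (huw : u < w) (hwm : w ≤ m) :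
    ∃ j ∈ Icc 1 m, 0 < z j - t ∧ z j - t < 1 :=
  ⟨w, mem_Icc.2 ⟨by omega, hwm⟩, h.2.1 w (mem_Ioc.2 ⟨huw, le_rfl⟩)⟩

lemma isClipSplit_card_filter (hz : AntitoneOn z (Set.Icc 1 m)) :
    IsClipSplit z m #{j ∈ Icc 1 m | max (min (z j - t) 1) 0 = 1}
      #{j ∈ Icc 1 m | 0 < max (min (z j - t) 1) 0} t := by
  simp only [clip_eq_one_iff, clip_pos_iff]
  have hle : ∀ i j, 1 ≤ i → i ≤ j → j ≤ m → z j - t ≤ z i - t := fun i j hi hij hjm =>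
    sub_le_sub_right (hz ⟨hi, hij.trans hjm⟩ ⟨hi.trans hij, hjm⟩ hij) t
  have hsat_iff {j} (hj1 : 1 ≤ j) (hjm : j ≤ m) := le_card_filter_Icc_iff (p := (1 ≤ z · - t))
    (fun i j hi hij hjm hj => hj.trans (hle i j hi hij hjm)) hj1 hjm
  have hpos_iff {j} (hj1 : 1 ≤ j) (hjm : j ≤ m) := le_card_filter_Icc_iff (p := (0 < z · - t))
    (fun i j hi hij hjm hj => hj.trans_le (hle i j hi hij hjm)) hj1 hjm
  have hcard_le {p : ℕ → Prop} [DecidablePred p] : #{j ∈ Icc 1 m | p j} ≤ m :=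
    (card_filter_le _ _).trans (by simp)
  refine ⟨fun j hj => ?_, fun j hj => ?_, fun j hj => ?_⟩ <;> rw [mem_Ioc] at hj
  · exact (hsat_iff (by omega) (hj.2.trans hcard_le)).1 hj.2
  · have hjm : j ≤ m := hj.2.trans hcard_le
    exact ⟨(hpos_iff (by omega) hjm).1 hj.2,
      not_le.1 fun h => hj.1.not_ge ((hsat_iff (by omega) hjm).2 h)⟩
  · exact not_lt.1 fun h => hj.1.not_ge ((hpos_iff (by omega) hj.2).2 h)

lemma isClipSplit_iff (hz : AntitoneOn z (Set.Icc 1 m)) (huw : u < w) (hwm : w ≤ m) :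
    IsClipSplit z m u w t ↔ (u = 0 ∨ t + 1 ≤ z u) ∧ (u = m ∨ z (u + 1) < t + 1) ∧
      (w = 0 ∨ t < z w) ∧ (w = m ∨ z (w + 1) ≤ t) := by
  constructor
  · rintro ⟨hsat, hfrac, hzero⟩
    refine ⟨?_, Or.inr ?_, Or.inr ?_, ?_⟩
    · rcases Nat.eq_zero_or_pos u with hu0 | hu0
      · exact Or.inl hu0
      · exact Or.inr (by linarith [hsat u (mem_Ioc.2 ⟨hu0, le_rfl⟩)])
    · linarith [hfrac (u + 1) (mem_Ioc.2 ⟨u.lt_succ_self, huw⟩)]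
    · linarith [hfrac w (mem_Ioc.2 ⟨huw, le_rfl⟩)]
    · rcases hwm.eq_or_lt with hwm | hwm
      · exact Or.inl hwm
      · exact Or.inr (by linarith [hzero (w + 1) (mem_Ioc.2 ⟨w.lt_succ_self, hwm⟩)])
  · rintro ⟨hu, hu1, hw, hw1⟩
    refine ⟨fun j hj => ?_, fun j hj => ?_, fun j hj => ?_⟩ <;> rw [mem_Ioc] at hj
    · have hzu : z u ≤ z j := hz ⟨by omega, by omega⟩ ⟨by omega, by omega⟩ hj.2
      linarith [hu.resolve_left (by omega)]
    · have hzu1 : z j ≤ z (u + 1) := hz ⟨by omega, by omega⟩ ⟨by omega, by omega⟩ hj.1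
      have hzw : z w ≤ z j := hz ⟨by omega, by omega⟩ ⟨by omega, by omega⟩ hj.2
      constructor <;> linarith [hu1.resolve_left (by omega), hw.resolve_left (by omega)]
    · have hzw1 : z j ≤ z (w + 1) := hz ⟨by omega, by omega⟩ ⟨by omega, by omega⟩ hj.1
      linarith [hw1.resolve_left (by omega)]

end IsClipSplit

theorem sparsek_threshold_search_correct_general
    (m : ℕ) (k : ℝ)
    (z : ℕ → ℝ) (hz : ∀ i j, 1 ≤ i → i < j → j ≤ m → z j < z i)
    (τ : ℝ)
    (hsum : ∑ j ∈ Finset.Icc 1 m, max (min (z j - τ) 1) 0 = k)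
    (u w : ℕ)
    (hu : u = ((Finset.Icc 1 m).filter (fun j => max (min (z j - τ) 1) 0 = 1)).card)
    (hw : w = ((Finset.Icc 1 m).filter (fun j => 0 < max (min (z j - τ) 1) 0)).card)
    (huw : u < w) :
    ((u = 0 ∨ τ + 1 ≤ z u) ∧ (u = m ∨ z (u + 1) < τ + 1) ∧
     (w = 0 ∨ τ < z w) ∧ (w = m ∨ z (w + 1) ≤ τ) ∧
     τ = (∑ j ∈ Finset.Icc (u + 1) w, z j + (u : ℝ) - k) / ((w : ℝ) - (u : ℝ))) ∧
    (∀ u' w' : ℕ, u' < w' → w' ≤ m → ∀ τ' : ℝ,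
      τ' = (∑ j ∈ Finset.Icc (u' + 1) w', z j + (u' : ℝ) - k) / ((w' : ℝ) - (u' : ℝ)) →
      (u' = 0 ∨ τ' + 1 ≤ z u') → (u' = m ∨ z (u' + 1) < τ' + 1) →
      (w' = 0 ∨ τ' < z w') → (w' = m ∨ z (w' + 1) ≤ τ') →
      τ' = τ) := by
  have hz' : AntitoneOn z (Set.Icc 1 m) :=
    StrictAntiOn.antitoneOn fun i hi j hj hij => hz i j hi.1 hij hj.2
  have hwm : w ≤ m := hw ▸ (card_filter_le _ _).trans (by simp)
  have hsplit : IsClipSplit z m u w τ := hu ▸ hw ▸ isClipSplit_card_filter hz'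
  obtain ⟨hu0, hu1, hw0, hw1⟩ := (isClipSplit_iff hz' huw hwm).1 hsplit
  refine ⟨⟨hu0, hu1, hw0, hw1, (hsplit.sum_clip_eq_iff huw hwm).1 hsum⟩, ?_⟩
  intro u' w' hu'w' hw'm τ' hτ' hu'0 hu'1 hw'0 hw'1
  have hsplit' := (isClipSplit_iff hz' hu'w' hw'm).2 ⟨hu'0, hu'1, hw'0, hw'1⟩
  exact eq_of_sum_clip_eq (hsplit'.exists_frac hu'w' hw'm) (hsplit.exists_frac huw hwm)
    (((hsplit'.sum_clip_eq_iff hu'w' hw'm).2 hτ').trans hsum.symm)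

/-- Correctness of the threshold search of the SparseK algorithm. With scores
`z 1 > z 2 > … > z m`, the true threshold `τ` (with `∑ clip(zⱼ - τ) = k`),
`u = |{j : clip(zⱼ-τ) = 1}|`, `w = |{j : clip(zⱼ-τ) > 0}|` and `u < w`:
the conditions `z u ≥ τ+1 > z (u+1)` and `z w > τ ≥ z (w+1)` hold (with the
conventions `z 0 = +∞`, `z (m+1) = -∞` expressed by disjunctions), together with
`τ = (∑_{u<j≤w} z j + u - k)/(w - u)`; conversely any pair `(u', w')`
satisfying these conditions yields the correct threshold `τ`. -/
theorem sparsek_threshold_search_correct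
    (m : ℕ) (k : ℝ) (hk0 : 0 < k) (hkm : k < (m : ℝ))
    (z : ℕ → ℝ) (hz : ∀ i j, 1 ≤ i → i < j → j ≤ m → z j < z i)
    (τ : ℝ)
    (hsum : ∑ j ∈ Finset.Icc 1 m, max (min (z j - τ) 1) 0 = k)
    (u w : ℕ)
    (hu : u = ((Finset.Icc 1 m).filter (fun j => max (min (z j - τ) 1) 0 = 1)).card)
    (hw : w = ((Finset.Icc 1 m).filter (fun j => 0 < max (min (z j - τ) 1) 0)).card)
    (huw : u < w) :
    ((u = 0 ∨ τ + 1 ≤ z u) ∧ (u = m ∨ z (u + 1) < τ + 1) ∧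
     (w = 0 ∨ τ < z w) ∧ (w = m ∨ z (w + 1) ≤ τ) ∧
     τ = (∑ j ∈ Finset.Icc (u + 1) w, z j + (u : ℝ) - k) / ((w : ℝ) - (u : ℝ))) ∧
    (∀ u' w' : ℕ, u' < w' → w' ≤ m → ∀ τ' : ℝ,
      τ' = (∑ j ∈ Finset.Icc (u' + 1) w', z j + (u' : ℝ) - k) / ((w' : ℝ) - (u' : ℝ)) →
      (u' = 0 ∨ τ' + 1 ≤ z u') → (u' = m ∨ z (u' + 1) < τ' + 1) →
      (w' = 0 ∨ τ' < z w') → (w' = m ∨ z (w' + 1) ≤ τ') →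
      τ' = τ) :=
  sparsek_threshold_search_correct_general m k z hz τ hsum u w hu hw huw
end
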